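/- Assume s > 2r + d, p > r, and λ_k ≥ L_* |k|^p for |k| > K with L_* > 0. For u ∈ W_P(C,s), the Jacobian entries of F(u)_k = -λ_k u_k + N_k(u) satisfy: the i-th off-diagonal row sum ∑_{k ≠ i} |∂F_i/∂u_k| ≤ C̃(1 + |i|^r), and the diagonal entry satisfies ∂F_i/∂u_i ≤ -L_*|i|^p + D₁|i|^r. Consequently, the i-th row quantity a_{ii} + ∑_{k≠i}|a_{ik}| tends to -∞ as |i| → ∞, and there exists l ∈ ℝ bounding μ_∞(DF^n(u)) ≤ l uniformly over all Galerkin truncations n and all u ∈ W_P(C,s). -/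

import Mathlib

/-!
The off-diagonal entries of row `i` are dominated, via the Peetre-type inequality
`|k| ≤ 2 |i| |i - k|`, by `2^r |i|^r |i - k|^{-(s - 2r)}`, and `s - 2r > d` makes this summable
over the lattice `ℤ^d`. So a row quantity is at most `-λ_i + O(|i|^r)`, which tends to `-∞`
because `λ_i ≥ L_* |i|^p` with `p > r`; a function tending to `-∞` along the cofinite filter is
bounded above, and the resulting bound does not depend on the matrix.
-/

open Filter
open scoped BigOperators Topology

noncomputable def znorm {d : ℕ} (k : Fin d → ℤ) : ℝ := ‖(fun i => (k i : ℝ) : Fin d → ℝ)‖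

/-- The modified norm on `ℤ^d`: the norm of `k` for `k ≠ 0`, and `|0| := 1`. -/
noncomputable def mnorm {d : ℕ} (k : Fin d → ℤ) : ℝ := if k = 0 then 1 else znorm k

section LatticeNorms

variable {d : ℕ}

lemma znorm_sub_le (k l : Fin d → ℤ) : znorm (k - l) ≤ znorm k + znorm l := by
  have h : (fun a => ((k - l) a : ℝ)) = (fun a => (k a : ℝ)) - fun a => (l a : ℝ) := by
    ext a; simp
  unfold znorm
  rw [h]
  exact norm_sub_le _ _

lemma one_le_znorm {k : Fin d → ℤ} (hk : k ≠ 0) : 1 ≤ znorm k := by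
  obtain ⟨a, ha⟩ := Function.ne_iff.1 hk
  calc (1 : ℝ) ≤ |(k a : ℝ)| := by exact_mod_cast Int.one_le_abs ha
    _ ≤ znorm k := norm_le_pi_norm (fun a => (k a : ℝ)) a

lemma mnorm_of_ne_zero {k : Fin d → ℤ} (hk : k ≠ 0) : mnorm k = znorm k := if_neg hk

lemma one_le_mnorm (k : Fin d → ℤ) : 1 ≤ mnorm k := by
  unfold mnorm
  split_ifs with hk
  exacts [le_rfl, one_le_znorm hk]

lemma mnorm_pos (k : Fin d → ℤ) : 0 < mnorm k := one_pos.trans_le (one_le_mnorm k)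

lemma znorm_le_mnorm (k : Fin d → ℤ) : znorm k ≤ mnorm k := by
  by_cases hk : k = 0
  · subst hk
    simp [mnorm, znorm, ← Pi.zero_def]
  · rw [mnorm_of_ne_zero hk]

lemma mnorm_sub_le (k l : Fin d → ℤ) : mnorm (k - l) ≤ mnorm k + mnorm l := by
  by_cases hkl : k - l = 0
  · rw [show mnorm (k - l) = 1 from if_pos hkl]
    linarith [one_le_mnorm k, mnorm_pos l]
  · rw [mnorm_of_ne_zero hkl]
    linarith [znorm_sub_le k l, znorm_le_mnorm k, znorm_le_mnorm l]

lemma mnorm_le_two_mul_mnorm_mul_mnorm_sub (i k : Fin d → ℤ) :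
    mnorm k ≤ 2 * mnorm i * mnorm (i - k) := by
  have h := mnorm_sub_le i (i - k)
  rw [sub_sub_cancel] at h
  nlinarith [one_le_mnorm i, one_le_mnorm (i - k)]

lemma tendsto_znorm_cofinite_atTop : Tendsto (znorm : (Fin d → ℤ) → ℝ) cofinite atTop := by
  have h : Tendsto (fun (k : Fin d → ℤ) a => (k a : ℝ)) cofinite (cocompact (Fin d → ℝ)) := by
    simpa only [coprodᵢ_cofinite, coprodᵢ_cocompact] using
      Tendsto.pi_map_coprodᵢ fun _ : Fin d => Int.tendsto_coe_cofinite
  exact tendsto_norm_cocompact_atTop.comp h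

open Module in
lemma summable_znorm_rpow_neg {t : ℝ} (ht : (d : ℝ) < t) :
    Summable (fun j : Fin d → ℤ => znorm j ^ (-t)) := by
  let b := (Pi.basisFun ℝ (Fin d)).restrictScalars ℤ
  have hrank : finrank ℤ (Submodule.span ℤ (Set.range (Pi.basisFun ℝ (Fin d)))) = d := by
    simp [finrank_eq_card_basis b]
  have hL := ZLattice.summable_norm_rpow _ (-t) (by rw [hrank]; linarith)
  refine (b.equivFun.symm.toEquiv.summable_iff.2 hL).congr fun j => ?_
  show ‖(b.equivFun.symm j : Fin d → ℝ)‖ ^ (-t) = _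
  congr 2
  ext a
  simp [b, Basis.equivFun_symm_apply, Pi.single_apply]

lemma summable_mnorm_rpow_neg {t : ℝ} (ht : (d : ℝ) < t) :
    Summable (fun j : Fin d → ℤ => mnorm j ^ (-t)) :=
  (summable_znorm_rpow_neg ht).congr_cofinite <| (eventually_cofinite_ne 0).mono
    fun _ hj => by simp only [mnorm_of_ne_zero hj]

end LatticeNorms

section RowEstimates

variable {d : ℕ} {r s : ℝ}

lemma mnorm_rpow_div_le (hr : 0 ≤ r) (i k : Fin d → ℤ) :
    mnorm k ^ r / mnorm (i - k) ^ (s - r) ≤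
      2 ^ r * mnorm i ^ r * mnorm (i - k) ^ (-(s - 2 * r)) := by
  have hi := mnorm_pos i
  have hik := mnorm_pos (i - k)
  have hpow : mnorm k ^ r ≤ 2 ^ r * mnorm i ^ r * mnorm (i - k) ^ r := by
    rw [← Real.mul_rpow (by positivity) hi.le,
      ← Real.mul_rpow (by positivity) hik.le]
    exact Real.rpow_le_rpow (mnorm_pos k).le (mnorm_le_two_mul_mnorm_mul_mnorm_sub i k) hr
  calc mnorm k ^ r / mnorm (i - k) ^ (s - r)
      ≤ 2 ^ r * mnorm i ^ r * mnorm (i - k) ^ r / mnorm (i - k) ^ (s - r) := by gcongr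
    _ = 2 ^ r * mnorm i ^ r * mnorm (i - k) ^ (-(s - 2 * r)) := by
      rw [mul_div_assoc, ← Real.rpow_sub hik]
      ring_nf

lemma summable_offDiag_abs_and_tsum_le {D : ℝ} (hr : 0 ≤ r) (hs : 2 * r + d < s) (hD : 0 ≤ D)
    {a : (Fin d → ℤ) → ℝ} {i : Fin d → ℤ}
    (ha : ∀ k, k ≠ i → |a k| ≤ D * mnorm k ^ r / mnorm (i - k) ^ (s - r)) :
    Summable (fun k => if k = i then 0 else |a k|) ∧
      (∑' k, if k = i then 0 else |a k|) ≤
        D * 2 ^ r * mnorm i ^ r * ∑' j : Fin d → ℤ, mnorm j ^ (-(s - 2 * r)) := by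
  set c := D * 2 ^ r * mnorm i ^ r
  have hc : 0 ≤ c := by have := mnorm_pos i; positivity
  have hshift : Summable (fun k => mnorm (i - k) ^ (-(s - 2 * r))) :=
    (Equiv.subLeft i).summable_iff.2 (summable_mnorm_rpow_neg (by linarith))
  have hmaj : Summable (fun k => c * mnorm (i - k) ^ (-(s - 2 * r))) := hshift.mul_left c
  have hle : ∀ k, (if k = i then 0 else |a k|) ≤ c * mnorm (i - k) ^ (-(s - 2 * r)) := by
    intro k
    split_ifs with hk
    · have := mnorm_pos (i - k); positivity
    · calc |a k| ≤ D * (mnorm k ^ r / mnorm (i - k) ^ (s - r)) := by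
            rw [← mul_div_assoc]; exact ha k hk
        _ ≤ D * (2 ^ r * mnorm i ^ r * mnorm (i - k) ^ (-(s - 2 * r))) := by
            gcongr; exact mnorm_rpow_div_le hr i k
        _ = c * mnorm (i - k) ^ (-(s - 2 * r)) := by ring
  have hsum : Summable (fun k => if k = i then 0 else |a k|) :=
    hmaj.of_nonneg_of_le (fun k => by split_ifs <;> positivity) hle
  refine ⟨hsum, (hsum.tsum_le_tsum hle hmaj).trans_eq ?_⟩
  rw [tsum_mul_left]
  exact congrArg (c * ·) ((Equiv.subLeft i).tsum_eq fun j => mnorm j ^ (-(s - 2 * r)))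

end RowEstimates

lemma tendsto_mul_rpow_sub_mul_rpow_atBot (E : ℝ) {L r p : ℝ} (hL : 0 < L) (hp : 0 < p)
    (hrp : r < p) : Tendsto (fun x => E * x ^ r - L * x ^ p) atTop atBot := by
  have hlim : Tendsto (fun x : ℝ => E * x ^ (r - p) - L) atTop (𝓝 (E * 0 - L)) :=
    ((tendsto_rpow_neg_atTop (sub_pos.2 hrp)).congr fun x => by rw [neg_sub]).const_mul E
      |>.sub_const L
  refine ((tendsto_rpow_atTop hp).atTop_mul_neg (by linarith) hlim).congr' ?_
  filter_upwards [eventually_gt_atTop 0] with x hx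
  rw [mul_sub, ← mul_assoc, mul_comm (x ^ p) E, mul_assoc, ← Real.rpow_add hx]
  ring_nf

lemma tendsto_mul_mnorm_rpow_sub_cofinite_atBot {d : ℕ} {r p K L : ℝ} (E : ℝ)
    {lam : (Fin d → ℤ) → ℝ} (hL : 0 < L) (hp : 0 < p) (hrp : r < p)
    (hlam : ∀ i, K < znorm i → L * znorm i ^ p ≤ lam i) :
    Tendsto (fun i => E * mnorm i ^ r - lam i) cofinite atBot := by
  refine tendsto_atBot_mono' _ ?_
    ((tendsto_mul_rpow_sub_mul_rpow_atBot E hL hp hrp).comp tendsto_znorm_cofinite_atTop)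
  filter_upwards [tendsto_znorm_cofinite_atTop.eventually_gt_atTop K, eventually_cofinite_ne 0]
    with i hK hi
  simp only [Function.comp_apply, mnorm_of_ne_zero hi]
  linarith [hlam i hK]

theorem stmt17_general {d r : ℕ} (s p K Ls D₁ : ℝ)
    (hs : 2 * (r : ℝ) + d < s) (hp : (r : ℝ) < p) (hLs : 0 < Ls) (hD₁ : 0 < D₁)
    (lam : (Fin d → ℤ) → ℝ)
    (hlam : ∀ i : Fin d → ℤ, K < znorm i → Ls * znorm i ^ p ≤ lam i) :
    ∃ Ct : ℝ, 0 < Ct ∧ ∃ l : ℝ,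
      ∀ a : (Fin d → ℤ) → (Fin d → ℤ) → ℝ,
        (∀ i k : Fin d → ℤ, k ≠ i →
          |a i k| ≤ D₁ * mnorm k ^ (r : ℝ) / mnorm (i - k) ^ (s - r)) →
        (∀ i : Fin d → ℤ, a i i ≤ -lam i + D₁ * mnorm i ^ (r : ℝ)) →
        (∀ i : Fin d → ℤ,
          Summable (fun k : Fin d → ℤ => if k = i then 0 else |a i k|) ∧
          (∑' k : Fin d → ℤ, if k = i then 0 else |a i k|) ≤
            Ct * (1 + mnorm i ^ (r : ℝ))) ∧
        Tendsto (fun i : Fin d → ℤ =>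
          a i i + ∑' k : Fin d → ℤ, if k = i then 0 else |a i k|) cofinite atBot ∧
        (∀ i : Fin d → ℤ,
          a i i + (∑' k : Fin d → ℤ, if k = i then 0 else |a i k|) ≤ l) := by
  have hr : (0 : ℝ) ≤ r := r.cast_nonneg
  set B := ∑' j : Fin d → ℤ, mnorm j ^ (-(s - 2 * r))
  have hB : 0 ≤ B := tsum_nonneg fun j => Real.rpow_nonneg (mnorm_pos j).le _
  set Ct := D₁ * 2 ^ (r : ℝ) * B + 1
  have hCt : 0 < Ct := by positivity
  set bound := fun i : Fin d → ℤ => (D₁ + Ct) * mnorm i ^ (r : ℝ) - lam i + Ct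
  have hbound : Tendsto bound cofinite atBot := tendsto_atBot_add_const_right _ Ct
    (tendsto_mul_mnorm_rpow_sub_cofinite_atBot _ hLs (hr.trans_lt hp) hp hlam)
  obtain ⟨l, hl⟩ := hbound.isBoundedUnder_le_atBot.bddAbove_range_of_cofinite
  refine ⟨Ct, hCt, l, fun a ha hdiag => ?_⟩
  have hrow : ∀ i, Summable (fun k => if k = i then 0 else |a i k|) ∧
      (∑' k, if k = i then 0 else |a i k|) ≤ Ct * (1 + mnorm i ^ (r : ℝ)) := fun i => by
    obtain ⟨hsum, hle⟩ := summable_offDiag_abs_and_tsum_le hr hs hD₁.le (ha i)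
    have := Real.rpow_nonneg (mnorm_pos i).le (r : ℝ)
    exact ⟨hsum, hle.trans (by nlinarith)⟩
  have hle : ∀ i, a i i + (∑' k, if k = i then 0 else |a i k|) ≤ bound i := fun i => by
    linarith [(hrow i).2, hdiag i]
  exact ⟨hrow, tendsto_atBot_mono hle hbound, fun i => (hle i).trans (hl ⟨i, rfl⟩)⟩

/-- Row estimates for the Jacobian of `F(u)_k = -λ_k u_k + N_k(u)` on `W_P(C,s)` with
`s > 2r + d`, `p > r`, `λ_i ≥ L_* |i|^p` for `|i| > K`.  If a matrix `a` satisfies the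
derivative bounds `|a i k| ≤ D₁|k|^r/|i-k|^{s-r}` (`k ≠ i`) and
`a i i ≤ -λ_i + D₁|i|^r`, then: the off-diagonal row sums are bounded by
`C̃(1 + |i|^r)`; the row quantity `a_ii + ∑_{k≠i}|a_ik|` tends to `-∞` as `|i| → ∞`;
and there is `l ∈ ℝ` bounding every row quantity, hence bounding `μ_∞` of every
Galerkin truncation `DF^n(u)`, uniformly in `n` and `u ∈ W_P(C,s)`. -/
theorem stmt17 {d r : ℕ} (hd : 1 ≤ d) (s p K Ls D₁ : ℝ)
    (hs : 2 * (r : ℝ) + d < s) (hp : (r : ℝ) < p) (hLs : 0 < Ls) (hD₁ : 0 < D₁)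
    (lam : (Fin d → ℤ) → ℝ)
    (hlam : ∀ i : Fin d → ℤ, K < znorm i → Ls * znorm i ^ p ≤ lam i) :
    ∃ Ct : ℝ, 0 < Ct ∧ ∃ l : ℝ,
      ∀ a : (Fin d → ℤ) → (Fin d → ℤ) → ℝ,
        (∀ i k : Fin d → ℤ, k ≠ i →
          |a i k| ≤ D₁ * mnorm k ^ (r : ℝ) / mnorm (i - k) ^ (s - r)) →
        (∀ i : Fin d → ℤ, a i i ≤ -lam i + D₁ * mnorm i ^ (r : ℝ)) →
        (∀ i : Fin d → ℤ,
          Summable (fun k : Fin d → ℤ => if k = i then 0 else |a i k|) ∧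
          (∑' k : Fin d → ℤ, if k = i then 0 else |a i k|) ≤
            Ct * (1 + mnorm i ^ (r : ℝ))) ∧
        Tendsto (fun i : Fin d → ℤ =>
          a i i + ∑' k : Fin d → ℤ, if k = i then 0 else |a i k|) cofinite atBot ∧
        (∀ i : Fin d → ℤ,
          a i i + (∑' k : Fin d → ℤ, if k = i then 0 else |a i k|) ≤ l) :=
  stmt17_general s p K Ls D₁ hs hp hLs hD₁ lam hlam
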